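/- arXiv:2003.03451 — 2 statements merged into one kernel-verified Lean document; each statement's English description precedes it below -/
import Mathlib

section
/- Every globally hyperbolic Lorentzian length space is causally simple; that is, if (X, d, ≪, ≤, τ) is a Lorentzian length space that is non-totally imprisoning and in which J⁺(x) ∩ J⁻(y) is compact for all x, y ∈ X, then ≤ is antisymmetric and the sets J⁺(x) and J⁻(x) are closed in the metric topology for every x ∈ X. -/
open scoped NNReal ENNReal
open Set Filter Topology

/-- A Lorentzian pre-length space: a causal space `(X, ≪, ≤)` carried by a metric space `X`,
together with a time separation function `τ : X × X → [0, ∞]`. -/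
structure LorentzianPreLengthSpace (X : Type*) [MetricSpace X] where
  /-- The chronological relation `≪`. -/
  chron : X → X → Prop
  /-- The causal relation `≤`. -/
  causal : X → X → Prop
  chron_trans : ∀ {x y z : X}, chron x y → chron y z → chron x z
  causal_refl : ∀ x : X, causal x x
  causal_trans : ∀ {x y z : X}, causal x y → causal y z → causal x z
  chron_imp_causal : ∀ {x y : X}, chron x y → causal x y
  /-- The time separation function `τ`. -/
  tau : X → X → ℝ≥0∞
  tau_lsc : LowerSemicontinuous fun p : X × X => tau p.1 p.2
  tau_rev_triangle : ∀ {x y z : X}, causal x y → causal y z → tau x y + tau y z ≤ tau x z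
  tau_eq_zero : ∀ {x y : X}, ¬ causal x y → tau x y = 0
  tau_pos_iff : ∀ {x y : X}, 0 < tau x y ↔ chron x y

namespace LorentzianPreLengthSpace

variable {X : Type*} [MetricSpace X] (L : LorentzianPreLengthSpace X)

/-- Chronological future `I⁺(x)`. -/
def Iplus (x : X) : Set X := {y | L.chron x y}

/-- Chronological past `I⁻(x)`. -/
def Iminus (x : X) : Set X := {y | L.chron y x}

/-- Causal future `J⁺(x)`. -/
def Jplus (x : X) : Set X := {y | L.causal x y}

/-- Causal past `J⁻(x)`. -/
def Jminus (x : X) : Set X := {y | L.causal y x}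

/-- A future directed causal curve on `[a,b]`: non-constant, Lipschitz, and order preserving
from the order of `[a,b]` to the causal relation. -/
def IsFutureCausalCurve (γ : ℝ → X) (a b : ℝ) : Prop :=
  a < b ∧ (∃ K : ℝ≥0, LipschitzOnWith K γ (Icc a b)) ∧
    (∃ s ∈ Icc a b, ∃ t ∈ Icc a b, γ s ≠ γ t) ∧
    ∀ ⦃s⦄, s ∈ Icc a b → ∀ ⦃t⦄, t ∈ Icc a b → s < t → L.causal (γ s) (γ t)

/-- A future directed timelike curve on `[a,b]`. -/
def IsFutureTimelikeCurve (γ : ℝ → X) (a b : ℝ) : Prop :=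
  a < b ∧ (∃ K : ℝ≥0, LipschitzOnWith K γ (Icc a b)) ∧
    (∃ s ∈ Icc a b, ∃ t ∈ Icc a b, γ s ≠ γ t) ∧
    ∀ ⦃s⦄, s ∈ Icc a b → ∀ ⦃t⦄, t ∈ Icc a b → s < t → L.chron (γ s) (γ t)

/-- The `τ`-length of a curve: the infimum over all partitions
`a = t₀ < t₁ < ⋯ < t_N = b` (with `N ≥ 1`) of `∑ τ(γ(tᵢ), γ(tᵢ₊₁))`. -/
noncomputable def tauLength (γ : ℝ → X) (a b : ℝ) : ℝ≥0∞ :=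
  ⨅ n : ℕ, ⨅ t : {t : Fin (n + 2) → ℝ // StrictMono t ∧ t 0 = a ∧ t (Fin.last (n + 1)) = b},
    ∑ i : Fin (n + 1), L.tau (γ (t.1 i.castSucc)) (γ (t.1 i.succ))

/-- Causal path connectedness: causally related (distinct) points are joined by a future
directed causal curve, chronologically related points by a future directed timelike curve. -/
def CausallyPathConnected : Prop :=
  (∀ x y : X, L.causal x y → x ≠ y →
      ∃ γ : ℝ → X, ∃ a b : ℝ, L.IsFutureCausalCurve γ a b ∧ γ a = x ∧ γ b = y) ∧
  (∀ x y : X, L.chron x y →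
      ∃ γ : ℝ → X, ∃ a b : ℝ, L.IsFutureTimelikeCurve γ a b ∧ γ a = x ∧ γ b = y)

/-- `p ≤_U q`: there is a future directed causal curve from `p` to `q` with image in `U`. -/
def CausalInside (U : Set X) (p q : X) : Prop :=
  ∃ γ : ℝ → X, ∃ a b : ℝ, L.IsFutureCausalCurve γ a b ∧ γ a = p ∧ γ b = q ∧ γ '' Icc a b ⊆ U

/-- `U` is causally closed: the relation `≤_U` is closed under limits inside `U`. -/
def CausallyClosedNbhd (U : Set X) : Prop :=
  ∀ (p q : X) (pn qn : ℕ → X), (∀ n, L.CausalInside U (pn n) (qn n)) →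
    Tendsto pn atTop (𝓝 p) → Tendsto qn atTop (𝓝 q) → p ∈ U → q ∈ U → L.CausalInside U p q

/-- Every point has a causally closed open neighborhood. -/
def LocallyCausallyClosed : Prop :=
  ∀ x : X, ∃ U : Set X, IsOpen U ∧ x ∈ U ∧ L.CausallyClosedNbhd U

/-- Localizability: every point has a localizing open neighborhood `Ω`. -/
def Localizable : Prop :=
  ∀ x : X, ∃ Ω : Set X, IsOpen Ω ∧ x ∈ Ω ∧
    (∃ C : ℝ≥0, ∀ (γ : ℝ → X) (a b : ℝ), L.IsFutureCausalCurve γ a b →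
        γ '' Icc a b ⊆ Ω → eVariationOn γ (Icc a b) ≤ C) ∧
    ∃ ω : X → X → ℝ≥0∞,
      ContinuousOn (fun pq : X × X => ω pq.1 pq.2) (Ω ×ˢ Ω) ∧
      (∀ p ∈ Ω, ∀ q ∈ Ω, ω p q ≠ ⊤) ∧
      (∀ p ∈ Ω, ∀ q ∈ Ω, ∀ r ∈ Ω, L.causal p q → L.causal q r → ω p q + ω q r ≤ ω p r) ∧
      (∀ p ∈ Ω, ∀ q ∈ Ω, ¬ L.causal p q → ω p q = 0) ∧
      (∀ p ∈ Ω, ∀ q ∈ Ω, (0 < ω p q ↔ L.chron p q)) ∧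
      (∀ y ∈ Ω, (L.Iplus y ∩ Ω).Nonempty ∧ (L.Iminus y ∩ Ω).Nonempty) ∧
      (∀ p ∈ Ω, ∀ q ∈ Ω, L.causal p q → p ≠ q →
        ∃ γ : ℝ → X, ∃ a b : ℝ, L.IsFutureCausalCurve γ a b ∧ γ a = p ∧ γ b = q ∧
          γ '' Icc a b ⊆ Ω ∧ L.tauLength γ a b = ω p q ∧
          ∀ (σ : ℝ → X) (c e : ℝ), L.IsFutureCausalCurve σ c e → σ c = p → σ e = q →
            σ '' Icc c e ⊆ Ω → L.tauLength σ c e ≤ L.tauLength γ a b)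

/-- `L` is a Lorentzian length space: causally path connected, locally causally closed,
localizable, and `τ` is the supremum of `τ`-lengths of connecting causal curves
(the supremum of the empty set being `0`). -/
def IsLengthSpace : Prop :=
  L.CausallyPathConnected ∧ L.LocallyCausallyClosed ∧ L.Localizable ∧
    ∀ x y : X, L.tau x y = sSup {ℓ : ℝ≥0∞ | ∃ γ : ℝ → X, ∃ a b : ℝ,
      L.IsFutureCausalCurve γ a b ∧ γ a = x ∧ γ b = y ∧ ℓ = L.tauLength γ a b}

/-- `K⁺`: the smallest closed and transitive relation containing `J⁺`. -/
def Kplus : Set (X × X) :=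
  ⋂₀ {R : Set (X × X) | IsClosed R ∧ (∀ a b c : X, (a, b) ∈ R → (b, c) ∈ R → (a, c) ∈ R) ∧
      {pq : X × X | L.causal pq.1 pq.2} ⊆ R}

/-- The Alexandrov topology, generated by the chronological diamonds. -/
def AlexandrovTopology : TopologicalSpace X :=
  TopologicalSpace.generateFrom {s : Set X | ∃ x y : X, s = L.Iplus x ∩ L.Iminus y}

/-- Strong causality: the Alexandrov topology coincides with the metric topology. -/
def StronglyCausal : Prop :=
  L.AlexandrovTopology = (inferInstance : TopologicalSpace X)

/-- Non-total imprisonment: causal curves in a compact set have uniformly bounded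
`d`-arclength. -/
def NonTotallyImprisoning : Prop :=
  ∀ K : Set X, IsCompact K → ∃ C : ℝ≥0, ∀ (γ : ℝ → X) (a b : ℝ),
    L.IsFutureCausalCurve γ a b → γ '' Icc a b ⊆ K → eVariationOn γ (Icc a b) ≤ C

/-- Global hyperbolicity. -/
def GloballyHyperbolic : Prop :=
  L.NonTotallyImprisoning ∧ ∀ x y : X, IsCompact (L.Jplus x ∩ L.Jminus y)

/-- Causality: the causal relation is antisymmetric. -/
def Causal : Prop := ∀ x y : X, L.causal x y → L.causal y x → x = y

/-- Causal simplicity. -/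
def CausallySimple : Prop :=
  L.Causal ∧ ∀ x : X, IsClosed (L.Jplus x) ∧ IsClosed (L.Jminus x)

/-- Distinguishing. -/
def Distinguishing : Prop :=
  (∀ x y : X, L.Iplus x = L.Iplus y → x = y) ∧ (∀ x y : X, L.Iminus x = L.Iminus y → x = y)

/-- Reflectivity. -/
def Reflective : Prop :=
  (∀ x y : X, L.Iplus x ⊆ L.Iplus y → L.Iminus y ⊆ L.Iminus x) ∧
  (∀ x y : X, L.Iminus y ⊆ L.Iminus x → L.Iplus x ⊆ L.Iplus y)

/-- Causal continuity. -/
def CausallyContinuous : Prop := L.Distinguishing ∧ L.Reflective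

/-- Stable causality: `K⁺` is antisymmetric. -/
def StablyCausal : Prop := ∀ x y : X, (x, y) ∈ L.Kplus → (y, x) ∈ L.Kplus → x = y

end LorentzianPreLengthSpace

/-- A distance homothetic map: `τ̃(f p, f q) = c · τ(p, q)` for some constant `c > 0`. -/
def DistanceHomothetic {X Y : Type*} [MetricSpace X] [MetricSpace Y]
    (LX : LorentzianPreLengthSpace X) (LY : LorentzianPreLengthSpace Y) (f : X → Y) : Prop :=
  ∃ c : ℝ≥0, 0 < c ∧ ∀ p q : X, LY.tau (f p) (f q) = (c : ℝ≥0∞) * LX.tau p q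

/-- A locally causally Lipschitz map. -/
def LocallyCausallyLipschitz {X Y : Type*} [MetricSpace X] [MetricSpace Y]
    (LX : LorentzianPreLengthSpace X) (f : X → Y) : Prop :=
  ∀ x : X, ∃ U : Set X, IsOpen U ∧ x ∈ U ∧ ∃ M : ℝ, 0 < M ∧
    ∀ x1 ∈ U, ∀ x2 ∈ U, LX.causal x1 x2 → dist (f x1) (f x2) ≤ M * dist x1 x2

/-!
If `x ≤ y ≤ x` with `x ≠ y`, every point of a causal curve from `x` to `y` lies in the diamond
`J⁺(x) ∩ J⁻(x)`, so any two of its points are causally related and running the curve back and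
forth `m` times is again a causal curve. These curves stay in the compact diamond while their
arclength grows like `m · d(x, y)`, against non-total imprisonment.

If `y` is a limit of points of `J⁺(x)`, pick `z ≫ y`. As `I⁻(z)` is an open neighbourhood of `y`,
`y` lies in the closure of `J⁺(x) ∩ J⁻(z)`, which is compact, hence closed; so `y ∈ J⁺(x)`.
-/

theorem mul_edist_le_eVariationOn_of_alternating {α : Type*} [PseudoEMetricSpace α]
    {f : ℝ → α} {p q : α} (hf : ∀ k : ℕ, f k = if Even k then p else q) (m : ℕ) :
    m * edist p q ≤ eVariationOn f (Icc 0 m) := by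
  have hstep : ∀ i : ℕ, edist (f ↑(i + 1)) (f i) = edist p q := by
    intro i
    rw [hf, hf]
    rcases Nat.even_or_odd i with hi | hi
    · simp [hi, Nat.even_add_one, edist_comm]
    · simp [Nat.even_add_one, Nat.not_even_iff_odd.2 hi]
  calc (m : ℝ≥0∞) * edist p q = ∑ i ∈ Finset.Ico 0 m, edist (f ↑(i + 1)) (f i) := by
        rw [Finset.sum_congr rfl fun i _ => hstep i]
        simp
    _ ≤ eVariationOn f (Icc 0 m) :=
        eVariationOn.sum_le_of_monotoneOn_Icc (u := fun i : ℕ => (i : ℝ))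
          (Nat.mono_cast.monotoneOn _) fun i hi => ⟨i.cast_nonneg, Nat.cast_le.2 hi.2⟩

theorem exists_lipschitzWith_alternating {a b : ℝ} (hab : a ≤ b) :
    ∃ w : ℝ → ℝ, (∃ K, LipschitzWith K w) ∧ (∀ t, w t ∈ Icc a b) ∧
      ∀ k : ℕ, w k = if Even k then a else b := by
  have hba : 0 ≤ (b - a) / 2 := by linarith
  refine ⟨fun t => (a + b) / 2 - (b - a) / 2 * Real.cos (Real.pi * t), ?_, fun t => ?_,
    fun k => ?_⟩
  · refine ⟨Real.toNNReal ((b - a) / 2 * Real.pi), LipschitzWith.of_dist_le_mul fun s t => ?_⟩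
    have hcos := Real.lipschitzWith_cos.dist_le_mul (Real.pi * s) (Real.pi * t)
    rw [Real.coe_toNNReal _ (by positivity)]
    simp only [Real.dist_eq, NNReal.coe_one, one_mul] at hcos ⊢
    calc |(a + b) / 2 - (b - a) / 2 * Real.cos (Real.pi * s) -
          ((a + b) / 2 - (b - a) / 2 * Real.cos (Real.pi * t))|
        = (b - a) / 2 * |Real.cos (Real.pi * s) - Real.cos (Real.pi * t)| := by
          rw [← abs_of_nonneg hba, ← abs_mul, abs_of_nonneg hba, ← abs_neg]; ring_nf
      _ ≤ (b - a) / 2 * |Real.pi * s - Real.pi * t| := by gcongr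
      _ = (b - a) / 2 * Real.pi * |s - t| := by
          rw [← mul_sub, abs_mul, abs_of_pos Real.pi_pos, mul_assoc]
  · have := Real.neg_one_le_cos (Real.pi * t)
    have := Real.cos_le_one (Real.pi * t)
    constructor <;> nlinarith
  · change (a + b) / 2 - (b - a) / 2 * Real.cos (Real.pi * k) = _
    rw [mul_comm Real.pi, Real.cos_nat_mul_pi]
    split_ifs with hk
    · rw [hk.neg_one_pow]; ring
    · rw [(Nat.not_even_iff_odd.1 hk).neg_one_pow]; ring

namespace LorentzianPreLengthSpace

variable {X : Type*} [MetricSpace X] (L : LorentzianPreLengthSpace X)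

theorem isOpen_Iplus (x : X) : IsOpen (L.Iplus x) := by
  rw [show L.Iplus x = (fun y => L.tau x y) ⁻¹' Ioi 0 from ext fun _ => L.tau_pos_iff.symm]
  exact (L.tau_lsc.comp (g := fun y => (x, y)) (by fun_prop)).isOpen_preimage 0

theorem isOpen_Iminus (x : X) : IsOpen (L.Iminus x) := by
  rw [show L.Iminus x = (fun y => L.tau y x) ⁻¹' Ioi 0 from ext fun _ => L.tau_pos_iff.symm]
  exact (L.tau_lsc.comp (g := fun y => (y, x)) (by fun_prop)).isOpen_preimage 0

variable {L}

theorem Localizable.exists_chron_future (h : L.Localizable) (y : X) : ∃ z, L.chron y z := by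
  obtain ⟨Ω, -, hy, -, -, -, -, -, -, -, hI, -⟩ := h y
  obtain ⟨z, hz, -⟩ := (hI y hy).1
  exact ⟨z, hz⟩

theorem Localizable.exists_chron_past (h : L.Localizable) (y : X) : ∃ z, L.chron z y := by
  obtain ⟨Ω, -, hy, -, -, -, -, -, -, -, hI, -⟩ := h y
  obtain ⟨z, hz, -⟩ := (hI y hy).2
  exact ⟨z, hz⟩

theorem isClosed_Jplus_of_isClosed_diamond (hfut : ∀ y, ∃ z, L.chron y z) {x : X}
    (hJ : ∀ z, IsClosed (L.Jplus x ∩ L.Jminus z)) : IsClosed (L.Jplus x) := by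
  refine isClosed_of_closure_subset fun y hy => ?_
  obtain ⟨z, hyz⟩ := hfut y
  have hsub : L.Iminus z ∩ L.Jplus x ⊆ L.Jplus x ∩ L.Jminus z :=
    fun w hw => ⟨hw.2, L.chron_imp_causal hw.1⟩
  exact ((hJ z).closure_subset_iff.2 hsub ((L.isOpen_Iminus z).inter_closure ⟨hyz, hy⟩)).1

theorem isClosed_Jminus_of_isClosed_diamond (hpast : ∀ y, ∃ z, L.chron z y) {x : X}
    (hJ : ∀ z, IsClosed (L.Jplus z ∩ L.Jminus x)) : IsClosed (L.Jminus x) := by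
  refine isClosed_of_closure_subset fun y hy => ?_
  obtain ⟨z, hzy⟩ := hpast y
  have hsub : L.Iplus z ∩ L.Jminus x ⊆ L.Jplus z ∩ L.Jminus x :=
    fun w hw => ⟨L.chron_imp_causal hw.1, hw.2⟩
  exact ((hJ z).closure_subset_iff.2 hsub ((L.isOpen_Iplus z).inter_closure ⟨hzy, hy⟩)).2

theorem IsFutureCausalCurve.mapsTo_diamond {γ : ℝ → X} {a b : ℝ}
    (hγ : L.IsFutureCausalCurve γ a b) (hloop : L.causal (γ b) (γ a)) :
    MapsTo γ (Icc a b) (L.Jplus (γ a) ∩ L.Jminus (γ a)) := by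
  obtain ⟨hab, -, -, hmono⟩ := hγ
  have hcausal : ∀ ⦃s⦄, s ∈ Icc a b → ∀ ⦃t⦄, t ∈ Icc a b → s ≤ t → L.causal (γ s) (γ t) :=
    fun s hs t ht hst => hst.eq_or_lt.elim (fun h => h ▸ L.causal_refl _) (hmono hs ht)
  intro t ht
  have ha := left_mem_Icc.2 hab.le
  have hb := right_mem_Icc.2 hab.le
  exact ⟨hcausal ha ht ht.1, L.causal_trans (hcausal ht hb ht.2) hloop⟩

theorem IsFutureCausalCurve.exists_mul_edist_le_eVariationOn {γ : ℝ → X} {a b : ℝ}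
    (hγ : L.IsFutureCausalCurve γ a b) (hloop : L.causal (γ b) (γ a)) (hne : γ a ≠ γ b)
    {m : ℕ} (hm : 0 < m) :
    ∃ σ : ℝ → X, L.IsFutureCausalCurve σ 0 m ∧ σ '' Icc 0 m ⊆ L.Jplus (γ a) ∩ L.Jminus (γ a) ∧
      m * edist (γ a) (γ b) ≤ eVariationOn σ (Icc 0 m) := by
  have hdiam := hγ.mapsTo_diamond hloop
  obtain ⟨hab, ⟨K, hK⟩, -, -⟩ := hγ
  obtain ⟨w, ⟨Kw, hw⟩, hwab, hwk⟩ := exists_lipschitzWith_alternating hab.le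
  have hσk : ∀ k : ℕ, (γ ∘ w) k = if Even k then γ a else γ b := fun k => by
    rw [Function.comp_apply, hwk k, apply_ite γ]
  have hmaps : MapsTo (γ ∘ w) (Icc 0 m) (L.Jplus (γ a) ∩ L.Jminus (γ a)) :=
    fun t _ => hdiam (hwab t)
  refine ⟨γ ∘ w, ⟨Nat.cast_pos.2 hm, ⟨K * Kw, hK.comp hw.lipschitzOnWith fun t _ => hwab t⟩,
    ?_, fun s hs t ht _ => L.causal_trans (hmaps hs).2 (hmaps ht).1⟩, hmaps.image_subset,
    mul_edist_le_eVariationOn_of_alternating hσk m⟩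
  refine ⟨0, ⟨le_rfl, m.cast_nonneg⟩, 1, ⟨zero_le_one, Nat.one_le_cast.2 hm⟩, ?_⟩
  have h0 := hσk 0
  have h1 := hσk 1
  simp only [Nat.cast_zero, Nat.cast_one, Even.zero, Nat.not_even_one, if_true,
    if_false] at h0 h1
  rwa [h0, h1]

theorem NonTotallyImprisoning.eq_of_causal_of_causal (hnti : L.NonTotallyImprisoning)
    (hpc : L.CausallyPathConnected) {x y : X} (hK : IsCompact (L.Jplus x ∩ L.Jminus x))
    (hxy : L.causal x y) (hyx : L.causal y x) : x = y := by
  by_contra hne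
  obtain ⟨γ, a, b, hγ, rfl, rfl⟩ := hpc.1 _ _ hxy hne
  obtain ⟨C, hC⟩ := hnti _ hK
  obtain ⟨m, hm⟩ := ENNReal.exists_nat_mul_gt (b := C) (edist_pos.2 hne).ne' ENNReal.coe_ne_top
  have hm0 : 0 < m := Nat.pos_of_ne_zero fun h => by simp [h] at hm
  obtain ⟨σ, hσ, himg, hvar⟩ := hγ.exists_mul_edist_le_eVariationOn hyx hne hm0
  exact (hvar.trans (hC σ 0 m hσ himg)).not_gt hm

end LorentzianPreLengthSpace

/-- every globally hyperbolic Lorentzian length space is causally simple. -/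
theorem globallyHyperbolic_causallySimple {X : Type*} [MetricSpace X]
    (L : LorentzianPreLengthSpace X) (hL : L.IsLengthSpace)
    (hnti : L.NonTotallyImprisoning)
    (hcpt : ∀ x y : X, IsCompact (L.Jplus x ∩ L.Jminus y)) :
    (∀ x y : X, L.causal x y → L.causal y x → x = y) ∧
    ∀ x : X, IsClosed (L.Jplus x) ∧ IsClosed (L.Jminus x) := by
  obtain ⟨hpc, -, hloc, -⟩ := hL
  refine ⟨fun x y => hnti.eq_of_causal_of_causal hpc (hcpt x x), fun x => ⟨?_, ?_⟩⟩
  · exact LorentzianPreLengthSpace.isClosed_Jplus_of_isClosed_diamond hloc.exists_chron_future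
      fun z => (hcpt x z).isClosed
  · exact LorentzianPreLengthSpace.isClosed_Jminus_of_isClosed_diamond hloc.exists_chron_past
      fun z => (hcpt z x).isClosed
end

section
/- Every causally simple Lorentzian length space is causally continuous; that is, if (X, d, ≪, ≤, τ) is a Lorentzian length space that is causal and in which J⁺(x) and J⁻(x) are closed for every x ∈ X, then X is distinguishing and reflective. -/
open scoped NNReal ENNReal
open Set Filter Topology

/-!
A point `x` of a Lorentzian length space is a limit of points of `I⁺(x)`: run along a timelike
curve leaving `x`. Hence if `I⁺(x) ⊆ I⁺(y)` and `J⁺(y)` is closed, then `x ∈ J⁺(y)`.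
Applied both ways this shows that `I⁺(x) = I⁺(y)` forces `x ≤ y ≤ x`, so causality gives
`x = y`. For reflectivity, given `z ≪ y` pick `z ≪ z' ≪ y`; then `I⁺(x) ⊆ I⁺(y) ⊆ I⁺(z')`,
so `z' ≤ x` and push-up yields `z ≪ x`. The past statements are dual.
-/

namespace LorentzianPreLengthSpace

variable {X : Type*} [MetricSpace X] (L : LorentzianPreLengthSpace X)

theorem chron_of_chron_of_causal {x y z : X} (hxy : L.chron x y) (hyz : L.causal y z) :
    L.chron x z :=
  L.tau_pos_iff.mp <| calc
    0 < L.tau x y := L.tau_pos_iff.mpr hxy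
    _ ≤ L.tau x y + L.tau y z := le_self_add
    _ ≤ L.tau x z := L.tau_rev_triangle (L.chron_imp_causal hxy) hyz

theorem chron_of_causal_of_chron {x y z : X} (hxy : L.causal x y) (hyz : L.chron y z) :
    L.chron x z :=
  L.tau_pos_iff.mp <| calc
    0 < L.tau y z := L.tau_pos_iff.mpr hyz
    _ ≤ L.tau x y + L.tau y z := le_add_self
    _ ≤ L.tau x z := L.tau_rev_triangle hxy (L.chron_imp_causal hyz)

theorem causal_of_Iplus_subset {x y : X} (hx : x ∈ closure (L.Iplus x))
    (hy : IsClosed (L.Jplus y)) (h : L.Iplus x ⊆ L.Iplus y) : L.causal y x :=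
  closure_minimal (fun _ hz => L.chron_imp_causal (h hz)) hy hx

theorem causal_of_Iminus_subset {x y : X} (hy : y ∈ closure (L.Iminus y))
    (hx : IsClosed (L.Jminus x)) (h : L.Iminus y ⊆ L.Iminus x) : L.causal y x :=
  closure_minimal (fun _ hz => L.chron_imp_causal (h hz)) hx hy

variable {L}

theorem Localizable.Iplus_nonempty (h : L.Localizable) (x : X) : (L.Iplus x).Nonempty := by
  obtain ⟨Ω, -, hxΩ, -, ω, -, -, -, -, -, hcone, -⟩ := h x
  exact (hcone x hxΩ).1.mono inter_subset_left

theorem Localizable.Iminus_nonempty (h : L.Localizable) (x : X) : (L.Iminus x).Nonempty := by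
  obtain ⟨Ω, -, hxΩ, -, ω, -, -, -, -, -, hcone, -⟩ := h x
  exact (hcone x hxΩ).2.mono inter_subset_left

theorem CausallyPathConnected.exists_chron_between (h : L.CausallyPathConnected) {x y : X}
    (hxy : L.chron x y) : ∃ z, L.chron x z ∧ L.chron z y := by
  obtain ⟨γ, a, b, ⟨hab, -, -, hchron⟩, rfl, rfl⟩ := h.2 x y hxy
  have hmid : (a + b) / 2 ∈ Ioo a b := ⟨by linarith, by linarith⟩
  exact ⟨γ ((a + b) / 2), hchron (left_mem_Icc.2 hab.le) (Ioo_subset_Icc_self hmid) hmid.1,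
    hchron (Ioo_subset_Icc_self hmid) (right_mem_Icc.2 hab.le) hmid.2⟩

theorem CausallyPathConnected.self_mem_closure_Iplus (h : L.CausallyPathConnected) {x : X}
    (hx : (L.Iplus x).Nonempty) : x ∈ closure (L.Iplus x) := by
  obtain ⟨w, hw⟩ := hx
  obtain ⟨γ, a, b, ⟨hab, ⟨K, hK⟩, -, hchron⟩, rfl, -⟩ := h.2 x w hw
  have ha : a ∈ Icc a b := left_mem_Icc.2 hab.le
  have hcont : ContinuousWithinAt γ (Ioc a b) a :=
    (hK.continuousOn a ha).mono Ioc_subset_Icc_self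
  have ha_closure : a ∈ closure (Ioc a b) := by rwa [closure_Ioc hab.ne]
  refine closure_mono ?_ (hcont.mem_closure_image ha_closure)
  rintro _ ⟨t, ht, rfl⟩
  exact hchron ha (Ioc_subset_Icc_self ht) ht.1

theorem CausallyPathConnected.self_mem_closure_Iminus (h : L.CausallyPathConnected) {x : X}
    (hx : (L.Iminus x).Nonempty) : x ∈ closure (L.Iminus x) := by
  obtain ⟨w, hw⟩ := hx
  obtain ⟨γ, a, b, ⟨hab, ⟨K, hK⟩, -, hchron⟩, -, rfl⟩ := h.2 w x hw
  have hb : b ∈ Icc a b := right_mem_Icc.2 hab.le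
  have hcont : ContinuousWithinAt γ (Ico a b) b :=
    (hK.continuousOn b hb).mono Ico_subset_Icc_self
  have hb_closure : b ∈ closure (Ico a b) := by rwa [closure_Ico hab.ne]
  refine closure_mono ?_ (hcont.mem_closure_image hb_closure)
  rintro _ ⟨t, ht, rfl⟩
  exact hchron (Ico_subset_Icc_self ht) hb ht.2

theorem IsLengthSpace.self_mem_closure_Iplus (hL : L.IsLengthSpace) (x : X) :
    x ∈ closure (L.Iplus x) :=
  hL.1.self_mem_closure_Iplus (hL.2.2.1.Iplus_nonempty x)

theorem IsLengthSpace.self_mem_closure_Iminus (hL : L.IsLengthSpace) (x : X) :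
    x ∈ closure (L.Iminus x) :=
  hL.1.self_mem_closure_Iminus (hL.2.2.1.Iminus_nonempty x)

theorem IsLengthSpace.distinguishing (hL : L.IsLengthSpace) (hcausal : L.Causal)
    (hclosed : ∀ x : X, IsClosed (L.Jplus x) ∧ IsClosed (L.Jminus x)) : L.Distinguishing := by
  refine ⟨fun x y h => hcausal x y ?_ ?_, fun x y h => hcausal x y ?_ ?_⟩
  · exact L.causal_of_Iplus_subset (hL.self_mem_closure_Iplus y) (hclosed x).1 h.ge
  · exact L.causal_of_Iplus_subset (hL.self_mem_closure_Iplus x) (hclosed y).1 h.le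
  · exact L.causal_of_Iminus_subset (hL.self_mem_closure_Iminus x) (hclosed y).2 h.le
  · exact L.causal_of_Iminus_subset (hL.self_mem_closure_Iminus y) (hclosed x).2 h.ge

theorem IsLengthSpace.reflective (hL : L.IsLengthSpace)
    (hclosed : ∀ x : X, IsClosed (L.Jplus x) ∧ IsClosed (L.Jminus x)) : L.Reflective := by
  constructor
  · intro x y h z hzy
    obtain ⟨z', hzz', hz'y⟩ := hL.1.exists_chron_between hzy
    have hsub : L.Iplus x ⊆ L.Iplus z' := fun _ hw => L.chron_trans hz'y (h hw)
    exact L.chron_of_chron_of_causal hzz'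
      (L.causal_of_Iplus_subset (hL.self_mem_closure_Iplus x) (hclosed z').1 hsub)
  · intro x y h z hxz
    obtain ⟨z', hxz', hz'z⟩ := hL.1.exists_chron_between hxz
    have hsub : L.Iminus y ⊆ L.Iminus z' := fun _ hw => L.chron_trans (h hw) hxz'
    exact L.chron_of_causal_of_chron
      (L.causal_of_Iminus_subset (hL.self_mem_closure_Iminus y) (hclosed z').2 hsub) hz'z

end LorentzianPreLengthSpace

/-- every causally simple Lorentzian length space is causally continuous. -/
theorem causallySimple_causallyContinuous {X : Type*} [MetricSpace X]
    (L : LorentzianPreLengthSpace X) (hL : L.IsLengthSpace)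
    (hcausal : ∀ x y : X, L.causal x y → L.causal y x → x = y)
    (hclosed : ∀ x : X, IsClosed (L.Jplus x) ∧ IsClosed (L.Jminus x)) :
    L.Distinguishing ∧ L.Reflective :=
  ⟨hL.distinguishing hcausal hclosed, hL.reflective hclosed⟩
end
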